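/- arXiv:2311.15765 — 2 statements merged into one kernel-verified Lean document; each statement's English description precedes it below -/
import Mathlib

section
/- Let A0 be the 4×4 complex matrix with rows (i, −i/4, 0, i/2), (i/4, −i, −i/2, 0), (0, i/2, i, −i/4), (−i/2, 0, i/4, −i). Then for every φ ∈ ℝ: det(exp(φ·A0) − Id) = 16·sin²(√15·φ/8)·sin²(√7·φ/8), where Id is the 4×4 identity matrix. -/
/-- The zero-distance limit of the coefficient matrix of the linearized evolution on
the degenerate spatial modes `±1` in the leapfrogging problem. -/
noncomputable def A0 : Matrix (Fin 4) (Fin 4) ℂ :=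
  !![Complex.I, -Complex.I / 4, 0, Complex.I / 2;
     Complex.I / 4, -Complex.I, -Complex.I / 2, 0;
     0, Complex.I / 2, Complex.I, -Complex.I / 4;
     -Complex.I / 2, 0, Complex.I / 4, -Complex.I]

namespace Stmt15Aux

open Matrix Complex

noncomputable def sC : ℂ := (Real.sqrt 15 : ℝ)
noncomputable def tC : ℂ := (Real.sqrt 7 : ℝ)

lemma sC_sq : sC ^ 2 = 15 := by
  have : Real.sqrt 15 ^ 2 = 15 := Real.sq_sqrt (by norm_num)
  simp [sC, ← Complex.ofReal_pow, this]

lemma tC_sq : tC ^ 2 = 7 := by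
  have : Real.sqrt 7 ^ 2 = 7 := Real.sq_sqrt (by norm_num)
  simp [tC, ← Complex.ofReal_pow, this]

lemma sC_ne : sC ≠ 0 := Complex.ofReal_ne_zero.mpr (by positivity)

lemma tC_ne : tC ≠ 0 := Complex.ofReal_ne_zero.mpr (by positivity)

noncomputable def P : Matrix (Fin 4) (Fin 4) ℂ :=
  !![1, 1, 3, 3;
     sC - 4, -(sC + 4), 4 - tC, 4 + tC;
     1, 1, -3, -3;
     sC - 4, -(sC + 4), tC - 4, -(4 + tC)]

noncomputable def dvec : Fin 4 → ℂ := ![I * sC / 4, -(I * sC) / 4, I * tC / 4, -(I * tC) / 4]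

lemma hAP : A0 * P = P * Matrix.diagonal dvec := by
  ext i j
  fin_cases i <;> fin_cases j <;>
    simp [A0, P, dvec, Matrix.mul_apply, Fin.sum_univ_four, Matrix.diagonal] <;>
    first
    | ring1
    | ((try ring_nf); simp only [sC_sq, tC_sq]; ring1)

lemma detP : P.det = -48 * (sC * tC) := by
  simp [P, Matrix.det_succ_row_zero, Fin.sum_univ_succ, Fin.succAbove,
    Fin.castSucc, Fin.castAdd, Fin.castLE]
  ring

lemma hPdet : IsUnit P.det := by
  rw [detP]
  exact (by simp [sC_ne, tC_ne] : (-48 * (sC * tC) : ℂ) ≠ 0).isUnit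

lemma key (x : ℝ) :
    (Complex.exp ((x : ℂ) * I) - 1) * (Complex.exp (-((x : ℂ) * I)) - 1) =
      ((4 * Real.sin (x / 2) ^ 2 : ℝ) : ℂ) := by
  rw [Complex.exp_mul_I, ← neg_mul, Complex.exp_mul_I]
  have hc : Complex.cos (x : ℂ) = (Real.cos x : ℂ) := (Complex.ofReal_cos x).symm
  have hs : Complex.sin (x : ℂ) = (Real.sin x : ℂ) := (Complex.ofReal_sin x).symm
  rw [Complex.cos_neg, Complex.sin_neg, hc, hs]
  have hr : (Real.cos x - 1) ^ 2 + Real.sin x ^ 2 = 4 * Real.sin (x / 2) ^ 2 := by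
    have h1 := Real.sin_sq_add_cos_sq x
    have h2 := Real.sin_sq_add_cos_sq (x / 2)
    have h3 := Real.cos_two_mul (x / 2)
    rw [show 2 * (x / 2) = x by ring] at h3
    nlinarith [h1, h2, h3]
  calc ((Real.cos x : ℂ) + (Real.sin x : ℂ) * I - 1) *
        ((Real.cos x : ℂ) + -(Real.sin x : ℂ) * I - 1)
      = ((Real.cos x : ℂ) - 1) ^ 2 + (Real.sin x : ℂ) ^ 2 - (I ^ 2 + 1) * (Real.sin x : ℂ) ^ 2 := by
        ring
    _ = ((Real.cos x : ℂ) - 1) ^ 2 + (Real.sin x : ℂ) ^ 2 := by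
        rw [Complex.I_sq]; ring
    _ = (((Real.cos x - 1) ^ 2 + Real.sin x ^ 2 : ℝ) : ℂ) := by push_cast; ring
    _ = ((4 * Real.sin (x / 2) ^ 2 : ℝ) : ℂ) := by rw [hr]

end Stmt15Aux

open Stmt15Aux Matrix Complex in
/-- Explicit formula for `det(exp(φ·A0) − Id)`. -/
theorem stmt_15 : ∀ φ : ℝ,
    Matrix.det (NormedSpace.exp ((φ : ℂ) • A0) - 1) =
      ((16 * Real.sin (Real.sqrt 15 * φ / 8) ^ 2
          * Real.sin (Real.sqrt 7 * φ / 8) ^ 2 : ℝ) : ℂ) := by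
  intro φ
  have hPu : IsUnit P := (Matrix.isUnit_iff_isUnit_det P).mpr hPdet
  have hA0 : A0 = P * Matrix.diagonal dvec * P⁻¹ := by
    conv_lhs => rw [← Matrix.mul_nonsing_inv_cancel_right P A0 hPdet]
    rw [hAP]
  have hsmul : (φ : ℂ) • A0 = P * Matrix.diagonal ((φ : ℂ) • dvec) * P⁻¹ := by
    rw [hA0, ← Matrix.smul_mul, ← Matrix.mul_smul, Matrix.diagonal_smul]
  rw [hsmul, Matrix.exp_conj P _ hPu, Matrix.exp_diagonal]
  set v : Fin 4 → ℂ := NormedSpace.exp ((φ : ℂ) • dvec) with hv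
  have h1 : P * Matrix.diagonal v * P⁻¹ - 1 = P * (Matrix.diagonal v - 1) * P⁻¹ := by
    rw [Matrix.mul_sub, Matrix.sub_mul, Matrix.mul_one, Matrix.mul_nonsing_inv P hPdet]
  rw [h1, Matrix.det_mul, Matrix.det_mul, Matrix.det_nonsing_inv,
    Ring.inverse_eq_inv']
  have hP0 : P.det ≠ 0 := hPdet.ne_zero
  rw [mul_comm P.det _, mul_assoc, mul_inv_cancel₀ hP0, mul_one]
  rw [← Matrix.diagonal_one, Matrix.diagonal_sub, Matrix.det_diagonal, Fin.prod_univ_four]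
  have hexp : ∀ z : ℂ, NormedSpace.exp z = Complex.exp z := fun z => by
    rw [← Complex.exp_eq_exp_ℂ]
  have hvi : ∀ i, v i = Complex.exp ((φ : ℂ) * dvec i) := fun i => by
    rw [hv, Pi.coe_exp, ← Complex.exp_eq_exp_ℂ, Pi.smul_apply, smul_eq_mul]
  simp only [Pi.sub_apply, Pi.one_apply, hvi]
  have hd0 : dvec 0 = I * sC / 4 := rfl
  have hd1 : dvec 1 = -(I * sC) / 4 := rfl
  have hd2 : dvec 2 = I * tC / 4 := rfl
  have hd3 : dvec 3 = -(I * tC) / 4 := rfl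
  have e0 : (φ : ℂ) * dvec 0 = ((Real.sqrt 15 * φ / 4 : ℝ) : ℂ) * I := by
    rw [hd0]; simp only [sC]; push_cast; ring
  have e1 : (φ : ℂ) * dvec 1 = -(((Real.sqrt 15 * φ / 4 : ℝ) : ℂ) * I) := by
    rw [hd1]; simp only [sC]; push_cast; ring
  have e2 : (φ : ℂ) * dvec 2 = ((Real.sqrt 7 * φ / 4 : ℝ) : ℂ) * I := by
    rw [hd2]; simp only [tC]; push_cast; ring
  have e3 : (φ : ℂ) * dvec 3 = -(((Real.sqrt 7 * φ / 4 : ℝ) : ℂ) * I) := by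
    rw [hd3]; simp only [tC]; push_cast; ring
  rw [e0, e1, e2, e3]
  calc (Complex.exp (((Real.sqrt 15 * φ / 4 : ℝ) : ℂ) * I) - 1) *
        (Complex.exp (-(((Real.sqrt 15 * φ / 4 : ℝ) : ℂ) * I)) - 1) *
        (Complex.exp (((Real.sqrt 7 * φ / 4 : ℝ) : ℂ) * I) - 1) *
        (Complex.exp (-(((Real.sqrt 7 * φ / 4 : ℝ) : ℂ) * I)) - 1)
      = ((Complex.exp (((Real.sqrt 15 * φ / 4 : ℝ) : ℂ) * I) - 1) *
          (Complex.exp (-(((Real.sqrt 15 * φ / 4 : ℝ) : ℂ) * I)) - 1)) *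
        ((Complex.exp (((Real.sqrt 7 * φ / 4 : ℝ) : ℂ) * I) - 1) *
          (Complex.exp (-(((Real.sqrt 7 * φ / 4 : ℝ) : ℂ) * I)) - 1)) := by ring
    _ = ((4 * Real.sin (Real.sqrt 15 * φ / 4 / 2) ^ 2 : ℝ) : ℂ) *
        ((4 * Real.sin (Real.sqrt 7 * φ / 4 / 2) ^ 2 : ℝ) : ℂ) := by
        rw [key (Real.sqrt 15 * φ / 4), key (Real.sqrt 7 * φ / 4)]
    _ = ((16 * Real.sin (Real.sqrt 15 * φ / 8) ^ 2
          * Real.sin (Real.sqrt 7 * φ / 8) ^ 2 : ℝ) : ℂ) := by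
        rw [show Real.sqrt 15 * φ / 4 / 2 = Real.sqrt 15 * φ / 8 by ring,
          show Real.sqrt 7 * φ / 4 / 2 = Real.sqrt 7 * φ / 8 by ring]
        push_cast; ring
end

section
/- Let A0 be the 4×4 complex matrix with rows (i, −i/4, 0, i/2), (i/4, −i, −i/2, 0), (0, i/2, i, −i/4), (−i/2, 0, i/4, −i). Then the matrix exp(2π·A0) − Id is invertible; more precisely det(exp(2π·A0) − Id) = 16·sin²(√15·π/4)·sin²(√7·π/4) > 0. -/
noncomputable def Pmat (s t : ℂ) : Matrix (Fin 4) (Fin 4) ℂ :=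
  !![1, 1, 3, 3;
     s - 4, -s - 4, 4 - t, 4 + t;
     1, 1, -3, -3;
     s - 4, -s - 4, t - 4, -4 - t]

noncomputable def Qmat (s t : ℂ) : Matrix (Fin 4) (Fin 4) ℂ :=
  !![(15 + 4*s)/60, s/60, (15 + 4*s)/60, s/60;
     (15 - 4*s)/60, -s/60, (15 - 4*s)/60, -s/60;
     (7 + 4*t)/84, -3*t/84, -(7 + 4*t)/84, 3*t/84;
     (7 - 4*t)/84, 3*t/84, -(7 - 4*t)/84, -3*t/84]

noncomputable def Dvec (s t : ℂ) : Fin 4 → ℂ :=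
  ![Complex.I * s / 4, -(Complex.I * s / 4), Complex.I * t / 4, -(Complex.I * t / 4)]

lemma Pmat_mul_Qmat (s t : ℂ) (hs : s^2 = 15) (ht : t^2 = 7) : Pmat s t * Qmat s t = 1 := by
  ext i j
  fin_cases i <;> fin_cases j <;>
    simp [Pmat, Qmat, Matrix.mul_apply, Fin.sum_univ_four, Matrix.one_apply] <;>
    ring_nf <;> simp only [hs, ht] <;> norm_num

lemma Qmat_mul_Pmat (s t : ℂ) (hs : s^2 = 15) (ht : t^2 = 7) : Qmat s t * Pmat s t = 1 := by
  ext i j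
  fin_cases i <;> fin_cases j <;>
    simp [Pmat, Qmat, Matrix.mul_apply, Fin.sum_univ_four, Matrix.one_apply] <;>
    ring_nf <;> simp only [hs, ht] <;> norm_num

lemma A0_mul_Pmat (s t : ℂ) (hs : s^2 = 15) (ht : t^2 = 7) :
    A0 * Pmat s t = Pmat s t * Matrix.diagonal (Dvec s t) := by
  ext i j
  fin_cases i <;> fin_cases j <;>
    simp [A0, Pmat, Dvec, Matrix.mul_apply, Fin.sum_univ_four, Matrix.diagonal] <;>
    ring_nf <;> simp only [hs, ht] <;> ring

lemma pairmul (x : ℝ) :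
    (Complex.exp ((x : ℂ) * Complex.I) - 1) * (Complex.exp (-((x : ℂ) * Complex.I)) - 1)
      = ((2 - 2 * Real.cos x : ℝ) : ℂ) := by
  have hx : -((x : ℂ) * Complex.I) = (-(x:ℂ)) * Complex.I := by ring
  rw [hx, Complex.exp_mul_I, Complex.exp_mul_I, Complex.cos_neg, Complex.sin_neg]
  have h2 : Complex.sin x ^ 2 + Complex.cos x ^ 2 = 1 := Complex.sin_sq_add_cos_sq x
  push_cast [Complex.ofReal_cos]
  linear_combination (-(Complex.sin x)^2) * Complex.I_sq + h2

theorem stmt_16' :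
    Matrix.det (NormedSpace.exp (((2 * Real.pi : ℝ) : ℂ) • A0) - 1) =
      ∏ i, (NormedSpace.exp ((((2 * Real.pi : ℝ) : ℂ) • Dvec ((Real.sqrt 15 : ℝ) : ℂ) ((Real.sqrt 7 : ℝ) : ℂ)) i) - 1) := by
  set s : ℂ := ((Real.sqrt 15 : ℝ) : ℂ) with hsdef
  set t : ℂ := ((Real.sqrt 7 : ℝ) : ℂ) with htdef
  have hs : s ^ 2 = 15 := by
    rw [hsdef, ← Complex.ofReal_pow, Real.sq_sqrt (by norm_num : (0:ℝ) ≤ 15)]; norm_num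
  have ht : t ^ 2 = 7 := by
    rw [htdef, ← Complex.ofReal_pow, Real.sq_sqrt (by norm_num : (0:ℝ) ≤ 7)]; norm_num
  set c : ℂ := ((2 * Real.pi : ℝ) : ℂ) with hcdef
  have hPQ := Pmat_mul_Qmat s t hs ht
  have hdPQ : Matrix.det (Pmat s t) * Matrix.det (Qmat s t) = 1 := by
    rw [← Matrix.det_mul, hPQ, Matrix.det_one]
  have hUnit : IsUnit (Pmat s t) :=
    (Matrix.isUnit_iff_isUnit_det _).mpr (IsUnit.of_mul_eq_one _ hdPQ)
  have hinv : (Pmat s t)⁻¹ = Qmat s t := Matrix.inv_eq_right_inv hPQ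
  have hA0 : c • A0 = Pmat s t * Matrix.diagonal (c • Dvec s t) * (Pmat s t)⁻¹ := by
    rw [hinv]
    have h0 : A0 = A0 * (Pmat s t * Qmat s t) := by rw [hPQ, mul_one]
    rw [Matrix.diagonal_smul, h0, ← mul_assoc, A0_mul_Pmat s t hs ht]
    simp only [Matrix.mul_smul, Matrix.smul_mul]

  have hexp : NormedSpace.exp (c • A0) - 1
      = Pmat s t * (Matrix.diagonal (NormedSpace.exp (c • Dvec s t)) - 1) * Qmat s t := by
    rw [hA0, Matrix.exp_conj _ _ hUnit, Matrix.exp_diagonal, hinv,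
      Matrix.mul_sub, Matrix.sub_mul, Matrix.mul_one, hPQ]
  rw [hexp, Matrix.det_mul, Matrix.det_mul]
  have hd : Matrix.det (Qmat s t) * Matrix.det (Pmat s t) = 1 := by
    rw [← Matrix.det_mul, Qmat_mul_Pmat s t hs ht, Matrix.det_one]
  have hpt : NormedSpace.exp (c • Dvec s t) = fun i => NormedSpace.exp ((c • Dvec s t) i) :=
    funext fun i => Pi.coe_exp _ i
  have h1 : (Matrix.diagonal (NormedSpace.exp (c • Dvec s t)) - 1)
      = Matrix.diagonal (fun i => NormedSpace.exp ((c • Dvec s t) i) - 1) := by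
    rw [← Matrix.diagonal_one, Matrix.diagonal_sub, hpt]
  rw [h1, Matrix.det_diagonal]
  linear_combination (∏ i, (NormedSpace.exp ((c • Dvec s t) i) - 1)) * hdPQ


theorem prod_eval :
    (∏ i, (NormedSpace.exp ((((2 * Real.pi : ℝ) : ℂ) • Dvec ((Real.sqrt 15 : ℝ) : ℂ) ((Real.sqrt 7 : ℝ) : ℂ)) i) - 1))
      = ((16 * Real.sin (Real.sqrt 15 * Real.pi / 4) ^ 2
          * Real.sin (Real.sqrt 7 * Real.pi / 4) ^ 2 : ℝ) : ℂ) := by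
  rw [Fin.prod_univ_four]
  simp only [Pi.smul_apply, smul_eq_mul, Dvec, Matrix.cons_val_zero, Matrix.cons_val_one,
    Matrix.head_cons, Matrix.cons_val_two, Matrix.tail_cons, Matrix.cons_val_three,
    ← Complex.exp_eq_exp_ℂ]
  obtain ⟨a, hadef⟩ : ∃ a : ℝ, 2 * (Real.sqrt 15 * Real.pi / 4) = a := ⟨_, rfl⟩
  obtain ⟨b, hbdef⟩ : ∃ b : ℝ, 2 * (Real.sqrt 7 * Real.pi / 4) = b := ⟨_, rfl⟩
  have e1 : ((2 * Real.pi : ℝ) : ℂ) * (Complex.I * ((Real.sqrt 15 : ℝ) : ℂ) / 4)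
      = (a : ℂ) * Complex.I := by rw [← hadef]; push_cast; ring
  have e2 : ((2 * Real.pi : ℝ) : ℂ) * -(Complex.I * ((Real.sqrt 15 : ℝ) : ℂ) / 4)
      = -((a : ℂ) * Complex.I) := by rw [← hadef]; push_cast; ring
  have e3 : ((2 * Real.pi : ℝ) : ℂ) * (Complex.I * ((Real.sqrt 7 : ℝ) : ℂ) / 4)
      = (b : ℂ) * Complex.I := by rw [← hbdef]; push_cast; ring
  have e4 : ((2 * Real.pi : ℝ) : ℂ) * -(Complex.I * ((Real.sqrt 7 : ℝ) : ℂ) / 4)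
      = -((b : ℂ) * Complex.I) := by rw [← hbdef]; push_cast; ring
  rw [e1, e2, e3, e4]
  have pa := pairmul a
  have pb := pairmul b
  have hr : (16 * Real.sin (Real.sqrt 15 * Real.pi / 4) ^ 2
      * Real.sin (Real.sqrt 7 * Real.pi / 4) ^ 2 : ℝ)
      = (2 - 2*Real.cos a) * (2 - 2*Real.cos b) := by
    rw [← hadef, ← hbdef, Real.sin_sq_eq_half_sub, Real.sin_sq_eq_half_sub]; ring
  rw [hr, Complex.ofReal_mul]
  linear_combination ((Complex.exp ((b:ℂ)*Complex.I) - 1)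
      * (Complex.exp (-((b:ℂ)*Complex.I)) - 1)) * pa
    + ((2 - 2*Real.cos a : ℝ) : ℂ) * pb

lemma sin_pos_aux {x : ℝ} (hx0 : 0 < x) (hx : Real.sqrt x < 4) :
    0 < Real.sin (Real.sqrt x * Real.pi / 4) := by
  apply Real.sin_pos_of_pos_of_lt_pi
  · have := Real.sqrt_pos.mpr hx0
    positivity
  · nlinarith [Real.pi_pos]

/-- The monodromy matrix `exp(2π·A0) − Id` is invertible, with explicit positive
determinant. -/
theorem stmt_16 :
    IsUnit (NormedSpace.exp (((2 * Real.pi : ℝ) : ℂ) • A0) - 1) ∧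
    Matrix.det (NormedSpace.exp (((2 * Real.pi : ℝ) : ℂ) • A0) - 1) =
      ((16 * Real.sin (Real.sqrt 15 * Real.pi / 4) ^ 2
          * Real.sin (Real.sqrt 7 * Real.pi / 4) ^ 2 : ℝ) : ℂ) ∧
    0 < 16 * Real.sin (Real.sqrt 15 * Real.pi / 4) ^ 2
          * Real.sin (Real.sqrt 7 * Real.pi / 4) ^ 2 := by
  have hdet : Matrix.det (NormedSpace.exp (((2 * Real.pi : ℝ) : ℂ) • A0) - 1)
      = ((16 * Real.sin (Real.sqrt 15 * Real.pi / 4) ^ 2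
          * Real.sin (Real.sqrt 7 * Real.pi / 4) ^ 2 : ℝ) : ℂ) := by
    rw [stmt_16', prod_eval]
  have h15 : 0 < Real.sin (Real.sqrt 15 * Real.pi / 4) :=
    sin_pos_aux (by norm_num) ((Real.sqrt_lt' (by norm_num)).mpr (by norm_num))
  have h7 : 0 < Real.sin (Real.sqrt 7 * Real.pi / 4) :=
    sin_pos_aux (by norm_num) ((Real.sqrt_lt' (by norm_num)).mpr (by norm_num))
  have hpos : 0 < 16 * Real.sin (Real.sqrt 15 * Real.pi / 4) ^ 2
      * Real.sin (Real.sqrt 7 * Real.pi / 4) ^ 2 := by positivity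
  refine ⟨?_, hdet, hpos⟩
  rw [Matrix.isUnit_iff_isUnit_det, hdet, isUnit_iff_ne_zero]
  exact_mod_cast ne_of_gt hpos
end
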